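/- arXiv:math/0011267 — 2 statements merged into one kernel-verified Lean document; each statement's English description precedes it below -/
import Mathlib

section
/- For a prime p, the number of subgroups of index p^k in ℤ² equals (p^{k+1} - 1)/(p - 1). -/
/-!
Every subgroup `H` of finite index in `ℤ²` has a unique Hermite normal form basis `(a, c), (0, b)`
with `a, b > 0` and `0 ≤ c < b`: here `aℤ` is the projection of `H` to the first coordinate,
`bℤ = H ∩ ({0} × ℤ)`, and `c` is determined modulo `b`. The index of `H` is the determinant `ab`,
so the subgroups of index `n` correspond to the pairs `(b, c)` with `b ∣ n` and `0 ≤ c < b`.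
There are `σ₁(n)` of them, and `σ₁(p^k) = 1 + p + ⋯ + p^k`.
-/

open AddSubgroup Module

theorem LinearMap.index_range_eq_natAbs_det {M : Type*} [AddCommGroup M] [Module.Free ℤ M]
    [Module.Finite ℤ M] (f : M →ₗ[ℤ] M) (hf : Function.Injective f) :
    (LinearMap.range f).toAddSubgroup.index = (LinearMap.det f).natAbs :=
  (Submodule.natAbs_det_equiv _ (LinearEquiv.ofInjective f hf)).symm

lemma Int.exists_eq_zmultiples_natCast (A : AddSubgroup ℤ) : ∃ n : ℕ, A = zmultiples (n : ℤ) := by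
  obtain ⟨g, rfl⟩ := Int.subgroup_cyclic A
  exact ⟨g.natAbs, by rw [Int.zmultiples_natAbs, zmultiples_eq_closure]⟩

lemma Int.zmultiples_natCast_injective : Function.Injective fun n : ℕ ↦ zmultiples (n : ℤ) := by
  intro m n (h : zmultiples (m : ℤ) = zmultiples (n : ℤ))
  have hmn : (n : ℤ) ∈ zmultiples (m : ℤ) := h ▸ mem_zmultiples _
  have hnm : (m : ℤ) ∈ zmultiples (n : ℤ) := h ▸ mem_zmultiples _
  rw [Int.mem_zmultiples_iff, Int.natCast_dvd_natCast] at hmn hnm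
  exact Nat.dvd_antisymm hmn hnm

lemma Nat.div_ne_zero_of_mem_divisors {b n : ℕ} (h : b ∈ n.divisors) : n / b ≠ 0 :=
  (Nat.div_pos (Nat.divisor_le h) (Nat.pos_of_mem_divisors h)).ne'

noncomputable def hnfLattice (a b : ℕ) (c : ℤ) : AddSubgroup (ℤ × ℤ) :=
  (LinearMap.range (Matrix.toLin (Basis.finTwoProd ℤ) (Basis.finTwoProd ℤ)
    !![(a : ℤ), 0; c, b])).toAddSubgroup

lemma mem_hnfLattice {a b : ℕ} {c : ℤ} {q : ℤ × ℤ} :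
    q ∈ hnfLattice a b c ↔ ∃ t s : ℤ, a * t = q.1 ∧ c * t + b * s = q.2 := by
  simp [hnfLattice, Prod.ext_iff]

lemma index_hnfLattice {a b : ℕ} (ha : a ≠ 0) (hb : b ≠ 0) (c : ℤ) :
    (hnfLattice a b c).index = a * b := by
  have hinj : Function.Injective
      (Matrix.toLin (Basis.finTwoProd ℤ) (Basis.finTwoProd ℤ) !![(a : ℤ), 0; c, b]) := by
    rw [← LinearMap.ker_eq_bot, LinearMap.ker_eq_bot']
    rintro ⟨t, s⟩ h
    obtain ⟨rfl, h⟩ : t = 0 ∧ c * t + b * s = 0 := by simpa [Prod.ext_iff, ha] using h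
    simpa [hb] using h
  rw [hnfLattice, LinearMap.index_range_eq_natAbs_det _ hinj, LinearMap.det_toLin,
    Matrix.det_fin_two_of]
  simp [Int.natAbs_mul]

lemma hnfLattice_add_mul (a b : ℕ) (c m : ℤ) : hnfLattice a b (c + b * m) = hnfLattice a b c := by
  ext q
  simp only [mem_hnfLattice]
  constructor
  · rintro ⟨t, s, h₁, h₂⟩
    exact ⟨t, s + m * t, h₁, by rw [← h₂]; ring⟩
  · rintro ⟨t, s, h₁, h₂⟩
    exact ⟨t, s - m * t, h₁, by rw [← h₂]; ring⟩

lemma hnfLattice_emod (a b : ℕ) (c : ℤ) : hnfLattice a b (c % b) = hnfLattice a b c := by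
  rw [← hnfLattice_add_mul a b (c % b) (c / b), Int.emod_add_mul_ediv]

lemma comap_inr_hnfLattice {a : ℕ} (ha : a ≠ 0) (b : ℕ) (c : ℤ) :
    (hnfLattice a b c).comap (AddMonoidHom.inr ℤ ℤ) = zmultiples (b : ℤ) := by
  ext y
  simp only [mem_comap, AddMonoidHom.inr_apply, mem_hnfLattice, Int.mem_zmultiples_iff]
  constructor
  · rintro ⟨t, s, h₁, h₂⟩
    obtain rfl : t = 0 := by simpa [ha] using h₁
    exact ⟨s, by simpa using h₂.symm⟩
  · rintro ⟨s, rfl⟩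
    exact ⟨0, s, by simp, by simp⟩

lemma natCast_mk_mem_hnfLattice_iff {a : ℕ} (ha : a ≠ 0) (b : ℕ) (c c' : ℤ) :
    ((a : ℤ), c') ∈ hnfLattice a b c ↔ (b : ℤ) ∣ c' - c := by
  simp only [mem_hnfLattice]
  constructor
  · rintro ⟨t, s, h₁, h₂⟩
    obtain rfl : t = 1 := by simpa [ha] using h₁
    exact ⟨s, by rw [← h₂]; ring⟩
  · rintro ⟨s, hs⟩
    exact ⟨1, s, by ring, by rw [← hs]; ring⟩

lemma eq_hnfLattice {H : AddSubgroup (ℤ × ℤ)} {a b : ℕ} {c : ℤ}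
    (hA : H.map (AddMonoidHom.fst ℤ ℤ) = zmultiples (a : ℤ))
    (hB : H.comap (AddMonoidHom.inr ℤ ℤ) = zmultiples (b : ℤ)) (hac : ((a : ℤ), c) ∈ H) :
    H = hnfLattice a b c := by
  have hb : ((0 : ℤ), (b : ℤ)) ∈ H := by
    simpa using (SetLike.ext_iff.mp hB (b : ℤ)).mpr (mem_zmultiples _)
  ext ⟨x, y⟩
  rw [mem_hnfLattice]
  constructor
  · intro hxy
    obtain ⟨t, rfl⟩ : (a : ℤ) ∣ x := by
      rw [← Int.mem_zmultiples_iff, ← hA]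
      exact mem_map_of_mem _ hxy
    have hy : y - c * t ∈ H.comap (AddMonoidHom.inr ℤ ℤ) := by
      convert H.sub_mem hxy (H.zsmul_mem hac t) using 1
      simp [mul_comm]
    obtain ⟨s, hs⟩ : (b : ℤ) ∣ y - c * t := by rwa [hB, Int.mem_zmultiples_iff] at hy
    exact ⟨t, s, rfl, by rw [← hs]; ring⟩
  · rintro ⟨t, s, rfl, rfl⟩
    convert H.add_mem (H.zsmul_mem hac t) (H.zsmul_mem hb s) using 1
    simp [mul_comm]

lemma exists_eq_hnfLattice (H : AddSubgroup (ℤ × ℤ)) (hH : H.index ≠ 0) :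
    ∃ a b c : ℕ, a ≠ 0 ∧ c < b ∧ H = hnfLattice a b c := by
  obtain ⟨a, hA⟩ := Int.exists_eq_zmultiples_natCast (H.map (AddMonoidHom.fst ℤ ℤ))
  obtain ⟨b, hB⟩ := Int.exists_eq_zmultiples_natCast (H.comap (AddMonoidHom.inr ℤ ℤ))
  have ha : a ≠ 0 := by
    rintro rfl
    have : ((H.index : ℤ), (0 : ℤ)) ∈ H := by simpa using H.nsmul_index_mem ((1 : ℤ), (0 : ℤ))
    have := hA ▸ mem_map_of_mem (AddMonoidHom.fst ℤ ℤ) this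
    simp_all
  have hb : b ≠ 0 := by
    rintro rfl
    have : ((0 : ℤ), (H.index : ℤ)) ∈ H := by simpa using H.nsmul_index_mem ((0 : ℤ), (1 : ℤ))
    have := (SetLike.ext_iff.mp hB (H.index : ℤ)).mp this
    simp_all
  obtain ⟨⟨_, c⟩, hac, rfl⟩ : (a : ℤ) ∈ H.map (AddMonoidHom.fst ℤ ℤ) := hA ▸ mem_zmultiples _
  have hc : 0 ≤ c % b := Int.emod_nonneg _ (by exact_mod_cast hb)
  have hcb : c % b < b := Int.emod_lt_of_pos _ (by omega)
  refine ⟨a, b, (c % b).toNat, ha, by omega, ?_⟩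
  rw [Int.toNat_of_nonneg hc, hnfLattice_emod]
  exact eq_hnfLattice hA hB hac

noncomputable def hnfLatticeOfIndex (n : ℕ) (x : Σ b : n.divisors, Fin b) :
    {H : AddSubgroup (ℤ × ℤ) // H.index = n} :=
  ⟨hnfLattice (n / x.1) x.1 x.2, by
    obtain ⟨⟨b, hb⟩, -⟩ := x
    rw [index_hnfLattice (Nat.div_ne_zero_of_mem_divisors hb) (Nat.pos_of_mem_divisors hb).ne',
      Nat.div_mul_cancel (Nat.dvd_of_mem_divisors hb)]⟩

lemma hnfLatticeOfIndex_injective (n : ℕ) : Function.Injective (hnfLatticeOfIndex n) := by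
  rintro ⟨⟨b, hb⟩, c⟩ ⟨⟨b', hb'⟩, c'⟩ h
  have h' : hnfLattice (n / b) b c = hnfLattice (n / b') b' c' := congrArg Subtype.val h
  have ha := Nat.div_ne_zero_of_mem_divisors hb
  have ha' := Nat.div_ne_zero_of_mem_divisors hb'
  obtain rfl : b = b' := Int.zmultiples_natCast_injective <| by
    simpa only [comap_inr_hnfLattice ha, comap_inr_hnfLattice ha'] using
      congrArg (comap (AddMonoidHom.inr ℤ ℤ)) h'
  have hdvd : (b : ℤ) ∣ c - c' := by
    rw [← natCast_mk_mem_hnfLattice_iff ha, ← h', natCast_mk_mem_hnfLattice_iff ha, sub_self]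
    exact dvd_zero _
  obtain rfl : c = c' := Fin.ext ((Nat.modEq_iff_dvd.mpr hdvd).eq_of_lt_of_lt c'.isLt c.isLt).symm
  rfl

lemma hnfLatticeOfIndex_surjective {n : ℕ} (hn : n ≠ 0) :
    Function.Surjective (hnfLatticeOfIndex n) := by
  rintro ⟨H, hH⟩
  obtain ⟨a, b, c, ha, hcb, rfl⟩ := exists_eq_hnfLattice H (hH ▸ hn)
  rw [index_hnfLattice ha (by omega)] at hH
  have hb : b ∈ n.divisors := Nat.mem_divisors.mpr ⟨Dvd.intro_left a hH, hn⟩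
  obtain rfl : n / b = a := Nat.div_eq_of_eq_mul_left (by omega) hH.symm
  exact ⟨⟨⟨b, hb⟩, ⟨c, hcb⟩⟩, rfl⟩

open ArithmeticFunction ArithmeticFunction.sigma in
theorem card_addSubgroup_index_eq_sigma_one {n : ℕ} (hn : n ≠ 0) :
    Nat.card {H : AddSubgroup (ℤ × ℤ) // H.index = n} = σ 1 n := by
  rw [← Nat.card_eq_of_bijective _
      ⟨hnfLatticeOfIndex_injective n, hnfLatticeOfIndex_surjective hn⟩,
    Nat.card_sigma, sigma_one_apply]
  simp only [Nat.card_eq_fintype_card, Fintype.card_fin]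
  exact Finset.sum_coe_sort n.divisors id

/-- The number of subgroups of index `p^k` in `ℤ²` is `(p^{k+1} - 1)/(p - 1)`
(i.e. `1 + p + ⋯ + p^k`). -/
theorem stmt_6 (p : ℕ) (hp : p.Prime) (k : ℕ) :
    Nat.card {H : AddSubgroup (ℤ × ℤ) // H.index = p ^ k} =
      (p ^ (k + 1) - 1) / (p - 1) := by
  rw [card_addSubgroup_index_eq_sigma_one (pow_ne_zero k hp.ne_zero),
    ArithmeticFunction.sigma_one_apply_prime_pow hp, Nat.geomSum_eq hp.two_le]
end

section
/- Let d ≥ 0 be an integer, δ > 0, and let (c_p)_p be nonnegative reals with |c_p - l_p p^d| ≤ δ p^{d - 1/2} for all primes p, where l_p are integers with 0 ≤ l_p ≤ n for a fixed n, and l_p ≥ 1 for a set of primes of positive density. Then for real s, ∑_p c_p p^{-s} converges if and only if ∑_p p^d p^{-s} converges, i.e. if and only if s > d + 1. -/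
open Filter Finset

lemma my_abel (h : ℕ → ℝ) (N : ℕ) :
    ∑ k ∈ range N, h k / (k + 1) =
      (∑ k ∈ range N, h k) / N +
        ∑ k ∈ range N, (∑ j ∈ range k, h j) / (k * (k + 1)) := by
  induction N with
  | zero => simp
  | succ N ih =>
    simp only [sum_range_succ]
    rw [ih]
    rcases Nat.eq_zero_or_pos N with rfl | hN
    · simp
    · have hN' : (N : ℝ) ≠ 0 := Nat.cast_ne_zero.mpr hN.ne'
      have h1 : ((N : ℝ) + 1) ≠ 0 := by positivity
      field_simp
      push_cast
      ring

lemma my_telesc (N : ℕ) : ∑ k ∈ range N, (1 : ℝ) / (k * (k + 1)) ≤ 1 := by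
  have key : ∀ M : ℕ, ∑ k ∈ range (M + 1), (1 : ℝ) / (k * (k + 1)) = 1 - 1 / (M + 1) := by
    intro M
    induction M with
    | zero => simp
    | succ M ih =>
      rw [sum_range_succ, ih]
      have h1 : ((M : ℝ) + 1) ≠ 0 := by positivity
      have h2 : ((M : ℝ) + 1 + 1) ≠ 0 := by positivity
      push_cast
      field_simp
      ring
  rcases Nat.eq_zero_or_pos N with rfl | hN
  · simp
  · obtain ⟨M, rfl⟩ := Nat.exists_eq_add_of_lt hN
    rw [zero_add, key]
    have : (0:ℝ) ≤ 1 / (M + 1) := by positivity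
    linarith

lemma my_bridge (g : ℕ → ℝ) (hg : ∀ k, ¬ k.Prime → g k = 0) :
    Summable (fun p : Nat.Primes => g (p : ℕ)) ↔ Summable g := by
  have h1 : (fun p : Nat.Primes => g (p : ℕ)) = g ∘ (Subtype.val : {p : ℕ // p.Prime} → ℕ) := rfl
  have h2 := summable_subtype_iff_indicator (s := {p : ℕ | p.Prime}) (f := g)
  rw [Set.indicator_eq_self.mpr] at h2
  · exact h1 ▸ h2
  · intro k hk
    by_contra hp
    exact hk (hg k hp)

lemma my_prime_inv_div :
    ¬ Summable (fun k : ℕ => if k.Prime then 1 / ((k : ℝ) + 1) else 0) := by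
  intro hs
  set g : ℕ → ℝ := fun k => if k.Prime then 1 / ((k : ℝ) + 1) else 0 with hgdef
  have h1 : Summable (fun p : Nat.Primes => g (p : ℕ)) :=
    (my_bridge g (fun k hk => by simp only [hgdef, if_neg hk])).mpr hs
  have h2 : Summable (fun p : Nat.Primes => 1 / (((p : ℕ) : ℝ) + 1)) := by
    refine h1.congr fun p => ?_
    simp only [hgdef, if_pos p.2]
  have h3 : Summable (fun p : Nat.Primes => ((p : ℕ) : ℝ) ^ (-1 : ℝ)) := by
    refine Summable.of_nonneg_of_le (fun p => by positivity) (fun p => ?_) (h2.mul_left 2)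
    have hp1 : (1 : ℝ) ≤ ((p : ℕ) : ℝ) := by exact_mod_cast p.2.one_lt.le
    rw [Real.rpow_neg_one, inv_eq_one_div, mul_one_div,
      div_le_div_iff₀ (by linarith) (by linarith)]
    nlinarith
  have := Nat.Primes.summable_rpow.mp h3
  linarith

lemma my_ite_sum (Q : ℕ → Prop) [DecidablePred Q] (N : ℕ) :
    ∑ k ∈ range N, (if Q k then 1 / ((k : ℝ) + 1) else 0) =
      ((((range N).filter Q).card : ℝ)) / N +
        ∑ k ∈ range N, ((((range k).filter Q).card : ℝ)) / (k * (k + 1)) := by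
  have h1 : ∀ M : ℕ, ((((range M).filter Q).card : ℝ)) =
      ∑ j ∈ range M, (if Q j then (1:ℝ) else 0) := by
    intro M; rw [Finset.sum_boole]
  have h2 := my_abel (fun k => if Q k then (1:ℝ) else 0) N
  simp only at h2
  rw [h1 N]
  calc ∑ k ∈ range N, (if Q k then 1 / ((k : ℝ) + 1) else 0)
      = ∑ k ∈ range N, (if Q k then (1:ℝ) else 0) / ((k:ℝ) + 1) := by
        refine Finset.sum_congr rfl fun k _ => ?_
        split_ifs <;> simp
    _ = _ := by
        rw [h2]
        congr 1
        refine Finset.sum_congr rfl fun k _ => ?_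
        rw [h1 k]

lemma my_divergence (Q : ℕ → Prop) [DecidablePred Q] (ε C : ℝ) (hε : 0 < ε) (hC : 0 ≤ C)
    (hB : ∀ k : ℕ, ε * (((range k).filter Nat.Prime).card : ℝ) - C ≤
      (((range k).filter Q).card : ℝ)) :
    ¬ Summable (fun k : ℕ => if Q k then 1 / ((k : ℝ) + 1) else 0) := by
  rw [not_summable_iff_tendsto_nat_atTop_of_nonneg (fun k => by positivity)]
  set TA : ℕ → ℝ :=
    fun N => ∑ k ∈ range N, ((((range k).filter Nat.Prime).card : ℝ)) / (k * (k + 1)) with hTA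
  have hTAtop : Tendsto TA atTop atTop := by
    have hSP : Tendsto (fun N => ∑ k ∈ range N, (if k.Prime then 1 / ((k : ℝ) + 1) else 0))
        atTop atTop :=
      (not_summable_iff_tendsto_nat_atTop_of_nonneg (fun k => by positivity)).mp my_prime_inv_div
    refine tendsto_atTop_mono (fun N => ?_) (tendsto_atTop_add_const_right _ (-1) hSP)
    have := my_ite_sum Nat.Prime N
    have hd : ((((range N).filter Nat.Prime).card : ℝ)) / N ≤ 1 := by
      rcases Nat.eq_zero_or_pos N with rfl | hN
      · simp
      · rw [div_le_one (by exact_mod_cast hN)]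
        exact_mod_cast (Finset.card_filter_le _ _).trans (Finset.card_range N).le
    simp only [hTA]
    linarith [this]
  refine tendsto_atTop_mono (fun N => ?_)
    ((tendsto_atTop_add_const_right _ (-C) (hTAtop.const_mul_atTop hε)))
  rw [my_ite_sum Q N]
  have hBN : (0:ℝ) ≤ ((((range N).filter Q).card : ℝ)) / N := by positivity
  have key : ε * TA N - C ≤ ∑ k ∈ range N, ((((range k).filter Q).card : ℝ)) / (k * (k + 1)) := by
    have step : ∀ k ∈ range N,
        ε * (((((range k).filter Nat.Prime).card : ℝ)) / (k * (k + 1)))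
            - C * (1 / ((k:ℝ) * (k + 1)))
          ≤ ((((range k).filter Q).card : ℝ)) / (k * (k + 1)) := by
      intro k _
      rcases Nat.eq_zero_or_pos k with rfl | hk
      · simp
      · have hk0 : (0:ℝ) < (k:ℝ) * (k + 1) := by
          have : (0:ℝ) < (k:ℝ) := by exact_mod_cast hk
          positivity
        rw [mul_div_assoc', mul_one_div, div_sub_div_same, div_le_div_iff₀ hk0 hk0]
        nlinarith [hB k]
    have hsum := Finset.sum_le_sum step
    rw [Finset.sum_sub_distrib, ← Finset.mul_sum, ← Finset.mul_sum] at hsum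
    have htel := my_telesc N
    have hCt : C * (∑ k ∈ range N, (1:ℝ) / (k * (k+1))) ≤ C * 1 :=
      mul_le_mul_of_nonneg_left htel hC
    simp only [hTA]
    linarith
  linarith

lemma my_count (l : ℕ → ℕ) (P₀ : ℕ) (ε : ℝ) (hε : 0 < ε)
    (hdens : Tendsto (fun N : ℕ =>
          (((Finset.range (N + 1)).filter (fun p => p.Prime ∧ 1 ≤ l p)).card : ℝ) /
            (((Finset.range (N + 1)).filter Nat.Prime).card : ℝ))
        atTop (nhds ε)) :
    ∃ C : ℝ, 0 ≤ C ∧ ∀ k : ℕ,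
      ε / 2 * (((range k).filter Nat.Prime).card : ℝ) - C ≤
        (((range k).filter (fun p => p.Prime ∧ 1 ≤ l p ∧ P₀ ≤ p)).card : ℝ) := by
  obtain ⟨N₀, hN₀⟩ :=
    (hdens.eventually (eventually_ge_nhds (show ε / 2 < ε by linarith))).exists_forall_of_atTop
  refine ⟨ε / 2 * (N₀ + 3) + P₀, by positivity, fun k => ?_⟩
  rcases lt_or_ge k (N₀ + 3) with hk | hk
  · have hA : (((range k).filter Nat.Prime).card : ℝ) ≤ (N₀ + 3 : ℕ) := by
      exact_mod_cast (Finset.card_filter_le _ _).trans_lt ((Finset.card_range k) ▸ hk) |>.le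
    have : (0:ℝ) ≤ (((range k).filter (fun p => p.Prime ∧ 1 ≤ l p ∧ P₀ ≤ p)).card : ℝ) := by
      positivity
    have hP : (0:ℝ) ≤ (P₀ : ℝ) := by positivity
    push_cast at hA
    nlinarith
  · have hk1 : k - 1 + 1 = k := by omega
    have hratio := hN₀ (k - 1) (by omega)
    rw [hk1] at hratio
    have hApos : 0 < ((range k).filter Nat.Prime).card := by
      refine Finset.card_pos.mpr ⟨2, ?_⟩
      simp only [Finset.mem_filter, Finset.mem_range]
      exact ⟨by omega, Nat.prime_two⟩
    have hApos' : (0:ℝ) < (((range k).filter Nat.Prime).card : ℝ) := by exact_mod_cast hApos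
    have hBA : ε / 2 * (((range k).filter Nat.Prime).card : ℝ) ≤
        (((range k).filter (fun p => p.Prime ∧ 1 ≤ l p)).card : ℝ) :=
      (le_div_iff₀ hApos').mp hratio
    have hsub : ((range k).filter (fun p => p.Prime ∧ 1 ≤ l p)) ⊆
        ((range k).filter (fun p => p.Prime ∧ 1 ≤ l p ∧ P₀ ≤ p)) ∪ range P₀ := by
      intro x hx
      simp only [Finset.mem_filter, Finset.mem_range] at hx
      rcases le_or_gt P₀ x with h | h
      · exact Finset.mem_union_left _
          (by simp [Finset.mem_filter, Finset.mem_range, hx.1, hx.2, h])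
      · exact Finset.mem_union_right _ (Finset.mem_range.mpr h)
    have hcard : ((range k).filter (fun p => p.Prime ∧ 1 ≤ l p)).card ≤
        ((range k).filter (fun p => p.Prime ∧ 1 ≤ l p ∧ P₀ ≤ p)).card + P₀ := by
      refine (Finset.card_le_card hsub).trans ?_
      exact (Finset.card_union_le _ _).trans (by simp)
    have hcard' : (((range k).filter (fun p => p.Prime ∧ 1 ≤ l p)).card : ℝ) ≤
        (((range k).filter (fun p => p.Prime ∧ 1 ≤ l p ∧ P₀ ≤ p)).card : ℝ) + P₀ := by
      exact_mod_cast hcard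
    have hN3 : (0:ℝ) ≤ ε / 2 * (N₀ + 3) := by positivity
    linarith

/-- Lang-Weil transfer principle (C) of Section 4: if
`|c_p - l_p p^d| ≤ δ p^{d-1/2}` with `0 ≤ l_p ≤ n` and `l_p ≥ 1` on a set of
primes of positive density, then `∑_p c_p p^{-s}` converges iff
`∑_p p^{d-s}` converges, iff `s > d + 1`. -/
theorem stmt_10 (d : ℕ) (δ : ℝ) (hδ : 0 < δ) (n : ℕ) (c : ℕ → ℝ) (l : ℕ → ℕ)
    (hc : ∀ p : ℕ, p.Prime → 0 ≤ c p)
    (hl : ∀ p : ℕ, p.Prime → l p ≤ n)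
    (hLW : ∀ p : ℕ, p.Prime →
      |c p - (l p : ℝ) * (p : ℝ) ^ (d : ℝ)| ≤ δ * (p : ℝ) ^ ((d : ℝ) - 1 / 2))
    (hdens : ∃ ε : ℝ, 0 < ε ∧
      Tendsto (fun N : ℕ =>
          (((Finset.range (N + 1)).filter (fun p => p.Prime ∧ 1 ≤ l p)).card : ℝ) /
            (((Finset.range (N + 1)).filter Nat.Prime).card : ℝ))
        atTop (nhds ε))
    (s : ℝ) :
    (Summable (fun p : Nat.Primes => c p * ((p : ℕ) : ℝ) ^ (-s)) ↔
        Summable (fun p : Nat.Primes => ((p : ℕ) : ℝ) ^ (d : ℝ) * ((p : ℕ) : ℝ) ^ (-s))) ∧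
      (Summable (fun p : Nat.Primes => c p * ((p : ℕ) : ℝ) ^ (-s)) ↔ (d : ℝ) + 1 < s) := by
  have hsplit : ∀ p : Nat.Primes,
      ((p : ℕ) : ℝ) ^ ((d : ℝ) - s) = ((p : ℕ) : ℝ) ^ (d : ℝ) * ((p : ℕ) : ℝ) ^ (-s) := by
    intro p
    have hp0 : (0:ℝ) < ((p : ℕ) : ℝ) := by exact_mod_cast p.2.pos
    rw [show (d : ℝ) - s = (d : ℝ) + (-s) by ring, Real.rpow_add hp0]
  have hiff2 : Summable (fun p : Nat.Primes => ((p : ℕ) : ℝ) ^ (d : ℝ) * ((p : ℕ) : ℝ) ^ (-s)) ↔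
      (d : ℝ) + 1 < s := by
    rw [← summable_congr hsplit, Nat.Primes.summable_rpow]
    constructor <;> intro h <;> linarith
  -- easy direction
  have hup : (d : ℝ) + 1 < s → Summable (fun p : Nat.Primes => c p * ((p : ℕ) : ℝ) ^ (-s)) := by
    intro hs
    have hsum : Summable (fun p : Nat.Primes => ((p : ℕ) : ℝ) ^ ((d : ℝ) - s)) :=
      Nat.Primes.summable_rpow.mpr (by linarith)
    refine Summable.of_nonneg_of_le (fun p => ?_) (fun p => ?_) (hsum.mul_left ((n : ℝ) + δ))
    · exact mul_nonneg (hc _ p.2) (Real.rpow_nonneg (by positivity) _)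
    · have hp := p.2
      have hp0 : (0:ℝ) < ((p : ℕ) : ℝ) := by exact_mod_cast hp.pos
      have hp1 : (1:ℝ) ≤ ((p : ℕ) : ℝ) := by exact_mod_cast hp.one_lt.le
      have habs := abs_le.mp (hLW _ hp)
      have hle : ((p : ℕ) : ℝ) ^ ((d : ℝ) - 1/2) ≤ ((p : ℕ) : ℝ) ^ (d : ℝ) :=
        Real.rpow_le_rpow_of_exponent_le hp1 (by linarith)
      have hln : ((l (p : ℕ) : ℝ)) ≤ (n : ℝ) := by exact_mod_cast hl _ hp
      have hpd : (0:ℝ) ≤ ((p : ℕ) : ℝ) ^ (d : ℝ) := Real.rpow_nonneg hp0.le _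
      have hcp : c (p : ℕ) ≤ ((n : ℝ) + δ) * ((p : ℕ) : ℝ) ^ (d : ℝ) := by
        nlinarith [habs.2]
      rw [hsplit p, ← mul_assoc]
      exact mul_le_mul_of_nonneg_right hcp (Real.rpow_nonneg hp0.le _)
  -- hard direction
  have hdown : Summable (fun p : Nat.Primes => c p * ((p : ℕ) : ℝ) ^ (-s)) → (d : ℝ) + 1 < s := by
    intro hsum
    by_contra hscon
    push_neg at hscon
    obtain ⟨ε, hε, hten⟩ := hdens
    set P₀ : ℕ := ⌈4 * δ^2⌉₊ + 2 with hP₀def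
    obtain ⟨C, hC0, hB⟩ := my_count l P₀ ε hε hten
    set Q : ℕ → Prop := fun p => p.Prime ∧ 1 ≤ l p ∧ P₀ ≤ p with hQdef
    have hkey : ∀ p : ℕ, Q p → 1 / ((p : ℝ) + 1) ≤ 2 * (c p * (p : ℝ) ^ (-s)) := by
      intro p hQ
      obtain ⟨hp, hlp, hPp⟩ := hQ
      have hp0 : (0:ℝ) < (p : ℝ) := by exact_mod_cast hp.pos
      have hp1 : (1:ℝ) ≤ (p : ℝ) := by exact_mod_cast hp.one_lt.le
      have hp4 : 4 * δ^2 ≤ (p : ℝ) := by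
        calc 4 * δ^2 ≤ (⌈4 * δ^2⌉₊ : ℝ) := Nat.le_ceil _
          _ ≤ (P₀ : ℝ) := by exact_mod_cast Nat.le_add_right _ 2
          _ ≤ (p : ℝ) := by exact_mod_cast hPp
      have hsq0 : (0:ℝ) < Real.sqrt (p : ℝ) := Real.sqrt_pos.mpr hp0
      have hsq : 2 * δ ≤ Real.sqrt (p : ℝ) := by
        have := Real.sqrt_le_sqrt hp4
        rwa [show (4 : ℝ) * δ^2 = (2*δ)^2 by ring, Real.sqrt_sq (by linarith)] at this
      have hhalf : δ * (p : ℝ) ^ (-(1/2 : ℝ)) ≤ 1/2 := by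
        rw [Real.rpow_neg hp0.le, ← Real.sqrt_eq_rpow, mul_inv_le_iff₀ hsq0]
        nlinarith
      have hsplit2 : (p : ℝ) ^ ((d : ℝ) - 1/2) = (p : ℝ) ^ (d : ℝ) * (p : ℝ) ^ (-(1/2 : ℝ)) := by
        rw [show (d : ℝ) - 1/2 = (d : ℝ) + (-(1/2)) by ring, Real.rpow_add hp0]
      have hpd : (0:ℝ) < (p : ℝ) ^ (d : ℝ) := Real.rpow_pos_of_pos hp0 _
      have hl1 : (1:ℝ) ≤ (l p : ℝ) := by exact_mod_cast hlp
      have habs := abs_le.mp (hLW p hp)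
      have hcp : (1/2) * (p : ℝ) ^ (d : ℝ) ≤ c p := by
        nlinarith [habs.1, mul_le_mul_of_nonneg_right hhalf hpd.le]
      have hds : (p : ℝ) ^ (-(1:ℝ)) ≤ (p : ℝ) ^ ((d : ℝ) - s) :=
        Real.rpow_le_rpow_of_exponent_le hp1 (by linarith)
      have hms : (0:ℝ) ≤ (p : ℝ) ^ (-s) := Real.rpow_nonneg hp0.le _
      have h1 : (1/2) * ((p : ℝ) ^ (d : ℝ) * (p : ℝ) ^ (-s)) ≤ c p * (p : ℝ) ^ (-s) := by
        rw [← mul_assoc]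
        exact mul_le_mul_of_nonneg_right hcp hms
      have h2 : (p : ℝ) ^ ((d : ℝ) - s) = (p : ℝ) ^ (d : ℝ) * (p : ℝ) ^ (-s) := by
        rw [show (d : ℝ) - s = (d : ℝ) + (-s) by ring, Real.rpow_add hp0]
      have h3 : 1 / ((p : ℝ) + 1) ≤ (p : ℝ) ^ (-(1:ℝ)) := by
        rw [Real.rpow_neg_one, inv_eq_one_div]
        exact one_div_le_one_div_of_le hp0 (by linarith)
      linarith [h2 ▸ hds]
    have hQsum : Summable (fun k : ℕ => if Q k then 1 / ((k : ℝ) + 1) else 0) := by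
      rw [← my_bridge _ (fun k hk => if_neg (fun hQ => hk hQ.1))]
      refine Summable.of_nonneg_of_le (fun p => ?_) (fun p => ?_) (hsum.mul_left 2)
      · split_ifs <;> positivity
      · split_ifs with h
        · exact hkey _ h
        · exact mul_nonneg (by norm_num)
            (mul_nonneg (hc _ p.2) (Real.rpow_nonneg (by positivity) _))
    exact my_divergence Q (ε/2) C (by linarith) hC0 hB hQsum
  exact ⟨⟨fun h => hiff2.mpr (hdown h), fun h => hup (hiff2.mp h)⟩,
    ⟨hdown, hup⟩⟩
end
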